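/- For every sequence of observations x_{1:n} with n ≥ 2, every time 1 ≤ t < n, and every state j ∈ 𝒴, the dynamic-programming identity δ_n(j) = max_{i ∈ 𝒴} δ_t(i)·p_{ij}(x_{t:n}) holds. -/
import Mathlib


open scoped BigOperators

namespace PMMViterbi

variable {𝒳 𝒴 : Type*} [Fintype 𝒴] [Nonempty 𝒴]

/-- Product of transition weights `∏_{k=t+1}^{n} q(x_k, y_k | x_{k-1}, y_{k-1})`
along the path `y`, for observations `x` (sequences are indexed starting from 1). -/
noncomputable def prodQ (q : 𝒳 × 𝒴 → 𝒳 × 𝒴 → ℝ) (x : ℕ → 𝒳) (y : ℕ → 𝒴) (t n : ℕ) : ℝ :=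
  ∏ k ∈ Finset.Ioc t n, q (x k, y k) (x (k - 1), y (k - 1))

/-- `p(x_{1:n}, y_{1:n}) = p₁(x₁,y₁) · ∏_{k=2}^n q(x_k,y_k|x_{k-1},y_{k-1})`. -/
noncomputable def pJoint (q : 𝒳 × 𝒴 → 𝒳 × 𝒴 → ℝ) (p1 : 𝒳 × 𝒴 → ℝ)
    (x : ℕ → 𝒳) (y : ℕ → 𝒴) (n : ℕ) : ℝ :=
  p1 (x 1, y 1) * prodQ q x y 1 n

/-- `δ_t(i)`: the maximum of `p(x_{1:t}, y_{1:t})` over paths with `y_t = i`. -/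
noncomputable def delta (q : 𝒳 × 𝒴 → 𝒳 × 𝒴 → ℝ) (p1 : 𝒳 × 𝒴 → ℝ)
    (x : ℕ → 𝒳) (t : ℕ) (i : 𝒴) : ℝ :=
  ⨆ (y : ℕ → 𝒴) (_ : y t = i), pJoint q p1 x y t

/-- `p_{ij}(x_{t:n})`: the maximum of `∏_{k=t+1}^n q(x_k,y_k|x_{k-1},y_{k-1})`
over paths with `y_t = i` and `y_n = j`. -/
noncomputable def pTrans (q : 𝒳 × 𝒴 → 𝒳 × 𝒴 → ℝ) (x : ℕ → 𝒳) (t n : ℕ) (i j : 𝒴) : ℝ :=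
  ⨆ (y : ℕ → 𝒴) (_ : y t = i ∧ y n = j), prodQ q x y t n

/-- Time `t` is an `i`-node of order `m - t` for `x_{1:m}`. -/
def IsNode (q : 𝒳 × 𝒴 → 𝒳 × 𝒴 → ℝ) (p1 : 𝒳 × 𝒴 → ℝ)
    (x : ℕ → 𝒳) (t m : ℕ) (i : 𝒴) : Prop :=
  ∀ j k : 𝒴, delta q p1 x t k * pTrans q x t m k j ≤ delta q p1 x t i * pTrans q x t m i j

/-- Time `t` is a strong `i`-node of order `m - t` for `x_{1:m}`. -/
def IsStrongNode (q : 𝒳 × 𝒴 → 𝒳 × 𝒴 → ℝ) (p1 : 𝒳 × 𝒴 → ℝ)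
    (x : ℕ → 𝒳) (t m : ℕ) (i : 𝒴) : Prop :=
  IsNode q p1 x t m i ∧
    ∀ j k : 𝒴, k ≠ i → 0 < delta q p1 x t i * pTrans q x t m i j →
      delta q p1 x t k * pTrans q x t m k j < delta q p1 x t i * pTrans q x t m i j

/-- `v` is a Viterbi path of `x_{1:n}`: it maximizes `y ↦ p(x_{1:n}, y_{1:n})`. -/
def IsViterbi (q : 𝒳 × 𝒴 → 𝒳 × 𝒴 → ℝ) (p1 : 𝒳 × 𝒴 → ℝ)
    (x : ℕ → 𝒳) (n : ℕ) (v : ℕ → 𝒴) : Prop :=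
  ∀ y : ℕ → 𝒴, pJoint q p1 x y n ≤ pJoint q p1 x v n

/-- `v` is an infinite Viterbi path of `x_{1:∞}`: for every `t ≥ 1` there is `m ≥ t`
such that for every `n ≥ m` some Viterbi path of `x_{1:n}` agrees with `v`
on coordinates `1, …, t`. -/
def IsInfViterbi (q : 𝒳 × 𝒴 → 𝒳 × 𝒴 → ℝ) (p1 : 𝒳 × 𝒴 → ℝ)
    (x : ℕ → 𝒳) (v : ℕ → 𝒴) : Prop :=
  ∀ t : ℕ, 1 ≤ t → ∃ m : ℕ, t ≤ m ∧ ∀ n : ℕ, m ≤ n →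
    ∃ w : ℕ → 𝒴, IsViterbi q p1 x n w ∧ ∀ s : ℕ, 1 ≤ s → s ≤ t → w s = v s

section Aux

variable {𝒳' 𝒴' : Type*} [Fintype 𝒴'] [Nonempty 𝒴']

/-- A function of paths depending only on coordinates `≤ m`, restricted to a nonempty
predicate depending only on coordinates `≤ m`, attains a maximum. -/
lemma exists_max_on {m : ℕ} (f : (ℕ → 𝒴') → ℝ) (P : (ℕ → 𝒴') → Prop)
    (hf : ∀ y y' : ℕ → 𝒴', (∀ k, k ≤ m → y k = y' k) → f y = f y')
    (hP : ∀ y y' : ℕ → 𝒴', (∀ k, k ≤ m → y k = y' k) → (P y → P y'))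
    (hne : ∃ y, P y) :
    ∃ y, P y ∧ ∀ y', P y' → f y' ≤ f y := by
  classical
  set E : (Fin (m + 1) → 𝒴') → ℕ → 𝒴' := fun z k => z ⟨min k m, by omega⟩ with hE
  set R : (ℕ → 𝒴') → Fin (m + 1) → 𝒴' := fun y i => y i with hR
  have hER : ∀ (y : ℕ → 𝒴') (k : ℕ), k ≤ m → E (R y) k = y k := by
    intro y k hk
    simp only [hE, hR]
    congr 1
    omega
  obtain ⟨y1, hy1⟩ := hne
  have hne' : Nonempty {z : Fin (m + 1) → 𝒴' // P (E z)} := by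
    refine ⟨⟨R y1, hP y1 (E (R y1)) ?_ hy1⟩⟩
    intro k hk; exact (hER y1 k hk).symm
  obtain ⟨z0, hz0⟩ := Finite.exists_max (fun z : {z : Fin (m + 1) → 𝒴' // P (E z)} => f (E z.1))
  refine ⟨E z0.1, z0.2, ?_⟩
  intro y' hy'
  have hP' : P (E (R y')) := hP y' (E (R y')) (fun k hk => (hER y' k hk).symm) hy'
  have := hz0 ⟨R y', hP'⟩
  calc f y' = f (E (R y')) := hf _ _ (fun k hk => (hER y' k hk).symm)
    _ ≤ f (E z0.1) := this

/-- The constrained supremum `⨆ y, ⨆ (_ : P y), f y` equals any attained maximum value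
(provided `f` is nonnegative). -/
lemma iSup_prop_eq_max (f : (ℕ → 𝒴') → ℝ) (P : (ℕ → 𝒴') → Prop)
    (hnn : ∀ y, 0 ≤ f y) (y0 : ℕ → 𝒴') (h0 : P y0) (hmax : ∀ y, P y → f y ≤ f y0) :
    (⨆ (y : ℕ → 𝒴') (_ : P y), f y) = f y0 := by
  classical
  have hbd : ∀ y : ℕ → 𝒴', (⨆ (_ : P y), f y) ≤ f y0 := by
    intro y
    by_cases h : P y
    · rw [ciSup_pos h]; exact hmax y h
    · haveI : IsEmpty (P y) := ⟨h⟩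
      rw [Real.iSup_of_isEmpty]; exact hnn y0
  refine le_antisymm (ciSup_le hbd) ?_
  have : f y0 = ⨆ (_ : P y0), f y0 := by rw [ciSup_pos h0]
  rw [this]
  exact le_ciSup ⟨f y0, by rintro r ⟨y, rfl⟩; exact hbd y⟩ y0

lemma prodQ_nonneg (q : 𝒳 × 𝒴 → 𝒳 × 𝒴 → ℝ) (hq : ∀ z z' : 𝒳 × 𝒴, 0 ≤ q z z')
    (x : ℕ → 𝒳) (y : ℕ → 𝒴) (t n : ℕ) : 0 ≤ prodQ q x y t n :=
  Finset.prod_nonneg fun _ _ => hq _ _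

lemma pJoint_nonneg (q : 𝒳 × 𝒴 → 𝒳 × 𝒴 → ℝ) (p1 : 𝒳 × 𝒴 → ℝ)
    (hq : ∀ z z' : 𝒳 × 𝒴, 0 ≤ q z z') (hp1 : ∀ z : 𝒳 × 𝒴, 0 ≤ p1 z)
    (x : ℕ → 𝒳) (y : ℕ → 𝒴) (n : ℕ) : 0 ≤ pJoint q p1 x y n :=
  mul_nonneg (hp1 _) (prodQ_nonneg q hq x y _ _)

lemma prodQ_congr (q : 𝒳 × 𝒴 → 𝒳 × 𝒴 → ℝ) (x : ℕ → 𝒳) {y y' : ℕ → 𝒴} {t n : ℕ}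
    (h : ∀ k, t ≤ k → k ≤ n → y k = y' k) : prodQ q x y t n = prodQ q x y' t n := by
  unfold prodQ
  refine Finset.prod_congr rfl fun k hk => ?_
  rw [Finset.mem_Ioc] at hk
  rw [h k (by omega) (by omega), h (k - 1) (by omega) (by omega)]

lemma pJoint_congr (q : 𝒳 × 𝒴 → 𝒳 × 𝒴 → ℝ) (p1 : 𝒳 × 𝒴 → ℝ) (x : ℕ → 𝒳)
    {y y' : ℕ → 𝒴} {n : ℕ} (hn : 1 ≤ n)
    (h : ∀ k, k ≤ n → y k = y' k) : pJoint q p1 x y n = pJoint q p1 x y' n := by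
  unfold pJoint
  rw [h 1 hn, prodQ_congr q x (fun k h1 h2 => h k h2)]

/-- Splitting the joint weight at an intermediate time. -/
lemma pJoint_split (q : 𝒳 × 𝒴 → 𝒳 × 𝒴 → ℝ) (p1 : 𝒳 × 𝒴 → ℝ) (x : ℕ → 𝒳)
    (y : ℕ → 𝒴) {t n : ℕ} (ht : 1 ≤ t) (htn : t ≤ n) :
    pJoint q p1 x y n = pJoint q p1 x y t * prodQ q x y t n := by
  unfold pJoint prodQ
  rw [mul_assoc, Finset.prod_Ioc_consecutive _ ht htn]

/-- `delta` is an attained maximum. -/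
lemma delta_exists_max (q : 𝒳 × 𝒴 → 𝒳 × 𝒴 → ℝ) (p1 : 𝒳 × 𝒴 → ℝ)
    (hq : ∀ z z' : 𝒳 × 𝒴, 0 ≤ q z z') (hp1 : ∀ z : 𝒳 × 𝒴, 0 ≤ p1 z)
    (x : ℕ → 𝒳) (n : ℕ) (hn : 1 ≤ n) (j : 𝒴) :
    ∃ y0 : ℕ → 𝒴, y0 n = j ∧ delta q p1 x n j = pJoint q p1 x y0 n ∧
      ∀ y : ℕ → 𝒴, y n = j → pJoint q p1 x y n ≤ pJoint q p1 x y0 n := by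
  obtain ⟨y0, h0, hmax⟩ := exists_max_on (m := n) (fun y => pJoint q p1 x y n)
    (fun y => y n = j)
    (fun y y' h => pJoint_congr q p1 x hn h)
    (fun y y' h hy => show y' n = j from h n le_rfl ▸ hy)
    ⟨fun _ => j, rfl⟩
  exact ⟨y0, h0, iSup_prop_eq_max _ _ (fun y => pJoint_nonneg q p1 hq hp1 x y n) y0 h0 hmax,
    hmax⟩

/-- `pTrans` is an attained maximum. -/
lemma pTrans_exists_max (q : 𝒳 × 𝒴 → 𝒳 × 𝒴 → ℝ)
    (hq : ∀ z z' : 𝒳 × 𝒴, 0 ≤ q z z')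
    (x : ℕ → 𝒳) (t n : ℕ) (htn : t < n) (i j : 𝒴) :
    ∃ y0 : ℕ → 𝒴, y0 t = i ∧ y0 n = j ∧ pTrans q x t n i j = prodQ q x y0 t n ∧
      ∀ y : ℕ → 𝒴, y t = i → y n = j → prodQ q x y t n ≤ prodQ q x y0 t n := by
  obtain ⟨y0, h0, hmax⟩ := exists_max_on (m := n) (fun y => prodQ q x y t n)
    (fun y => y t = i ∧ y n = j)
    (fun y y' h => prodQ_congr q x (fun k h1 h2 => h k h2))
    (fun y y' h hy => show y' t = i ∧ y' n = j from ⟨h t (le_of_lt htn) ▸ hy.1, h n le_rfl ▸ hy.2⟩)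
    ⟨fun k => if k = t then i else j, by
      refine ⟨by simp, ?_⟩
      show (if n = t then i else j) = j
      rw [if_neg (by omega : ¬ n = t)]⟩
  refine ⟨y0, h0.1, h0.2,
    iSup_prop_eq_max _ _ (fun y => prodQ_nonneg q hq x y t n) y0 h0 hmax,
    fun y h1 h2 => hmax y ⟨h1, h2⟩⟩

end Aux

/-- the dynamic-programming identity
`δ_n(j) = max_{i ∈ 𝒴} δ_t(i) · p_{ij}(x_{t:n})` for `1 ≤ t < n`. -/
theorem delta_dp_identity (q : 𝒳 × 𝒴 → 𝒳 × 𝒴 → ℝ) (p1 : 𝒳 × 𝒴 → ℝ)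
    (hq : ∀ z z' : 𝒳 × 𝒴, 0 ≤ q z z') (hp1 : ∀ z : 𝒳 × 𝒴, 0 ≤ p1 z)
    (x : ℕ → 𝒳) (t n : ℕ) (ht : 1 ≤ t) (htn : t < n) (j : 𝒴) :
    delta q p1 x n j = ⨆ i : 𝒴, delta q p1 x t i * pTrans q x t n i j := by
  classical
  obtain ⟨yn, hyn, hdn, hdmax⟩ := delta_exists_max q p1 hq hp1 x n (by omega) j
  apply le_antisymm
  · -- delta n j ≤ sup
    obtain ⟨yt, hyt, hdt, hdtmax⟩ := delta_exists_max q p1 hq hp1 x t ht (yn t)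
    obtain ⟨yp, hyp1, hyp2, hpt, hptmax⟩ := pTrans_exists_max q hq x t n htn (yn t) j
    have hsplit := pJoint_split q p1 x yn ht (le_of_lt htn)
    have h1 : pJoint q p1 x yn t ≤ delta q p1 x t (yn t) := by
      rw [hdt]; exact hdtmax yn rfl
    have h2 : prodQ q x yn t n ≤ pTrans q x t n (yn t) j := by
      rw [hpt]; exact hptmax yn rfl hyn
    have hle : delta q p1 x n j ≤ delta q p1 x t (yn t) * pTrans q x t n (yn t) j := by
      rw [hdn, hsplit]
      have hd0 : 0 ≤ delta q p1 x t (yn t) := by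
        rw [hdt]; exact pJoint_nonneg q p1 hq hp1 x yt t
      exact mul_le_mul h1 h2 (prodQ_nonneg q hq x yn t n) hd0
    exact le_trans hle
      (le_ciSup (f := fun i => delta q p1 x t i * pTrans q x t n i j)
        (Set.Finite.bddAbove (Set.finite_range _)) (yn t))
  · refine ciSup_le fun i => ?_
    obtain ⟨yd, hyd, hdd, _⟩ := delta_exists_max q p1 hq hp1 x t ht i
    obtain ⟨yp, hyp1, hyp2, hpt, _⟩ := pTrans_exists_max q hq x t n htn i j
    set y : ℕ → 𝒴 := fun k => if k ≤ t then yd k else yp k with hy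
    have hyn' : y n = j := by
      have : ¬ n ≤ t := by omega
      simp only [hy, this, if_false]; exact hyp2
    have hJ : pJoint q p1 x y t = pJoint q p1 x yd t := by
      refine pJoint_congr q p1 x ht fun k hk => ?_
      simp [hy, hk]
    have hQ : prodQ q x y t n = prodQ q x yp t n := by
      refine prodQ_congr q x fun k h1 h2 => ?_
      rcases eq_or_lt_of_le h1 with h | h
      · simp [hy, ← h, hyd, hyp1]
      · have : ¬ k ≤ t := by omega
        simp [hy, this]
    calc delta q p1 x t i * pTrans q x t n i j
        = pJoint q p1 x yd t * prodQ q x yp t n := by rw [hdd, hpt]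
      _ = pJoint q p1 x y t * prodQ q x y t n := by rw [hJ, hQ]
      _ = pJoint q p1 x y n := (pJoint_split q p1 x y ht (le_of_lt htn)).symm
      _ ≤ pJoint q p1 x yn n := hdmax y hyn'
      _ = delta q p1 x n j := hdn.symm


end PMMViterbi
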